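/- Let E, A ∈ ℂ^{n×n}, b ∈ ℂ^n, and z₁,…,z_k ∈ ℂ points at which z_iE − A is invertible. Let V ∈ ℂ^{n×r} be a matrix whose column span contains all vectors (z_iE − A)^{-1}b, and let V' ∈ ℂ^{n×r} be any other matrix with the same column span (range(V') = range(V)) such that W^H(z_iE−A)V and W^H(z_iE−A)V' are invertible for some fixed W ∈ ℂ^{n×r}. Then the two reduced transfer functions Ĥ(z_i) built via (V,W) and (V',W) with Ê = W^H E V, Â = W^H A V, Q̂ = V^H Q V, b̂ = W^H b (and analogously for V') agree at every z_i, for any Hermitian Q ∈ ℂ^{n×n}: both equal H(z_i) = b^H(z_iE−A)^{-H}Q(z_iE−A)^{-1}b. -/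

import Mathlib

/-! Write `x = (zᵢE − A)⁻¹b = V c`. Then `Wᴴ(zᵢE − A)V c = Wᴴb`, so the reduced solve
`(Wᴴ(zᵢE − A)V)⁻¹ Wᴴb` returns `c`, and the reduced value `cᴴ(VᴴQV)c` is `xᴴQx = H(zᵢ)`.
Since `V'` has the same range, the same argument applies to it with another coefficient vector. -/

open Matrix

variable {m n R : Type*} [Fintype m] [Fintype n] [CommRing R]

theorem inv_mul_mul_mulVec_of_mulVec_eq [DecidableEq n] (L : Matrix n m R) (M : Matrix m m R)
    (V : Matrix m n R) (hLMV : IsUnit (L * M * V).det) {b : m → R} {c : n → R}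
    (hc : M *ᵥ V *ᵥ c = b) :
    (L * M * V)⁻¹ *ᵥ L *ᵥ b = c := by
  rw [← hc, mulVec_mulVec _ M, mulVec_mulVec _ L, ← Matrix.mul_assoc, mulVec_mulVec,
    nonsing_inv_mul _ hLMV, one_mulVec]

variable [StarRing R]

theorem star_dotProduct_conjTranspose_mul_mul_mulVec (B : Matrix m n R) (Y : Matrix m m R)
    (u : n → R) :
    star u ⬝ᵥ (Bᴴ * Y * B) *ᵥ u = star (B *ᵥ u) ⬝ᵥ Y *ᵥ (B *ᵥ u) := by
  rw [← mulVec_mulVec, ← mulVec_mulVec, dotProduct_mulVec, ← star_mulVec]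

theorem star_dotProduct_inv_conjTranspose_mul_mul_inv_mulVec [DecidableEq m] (M Y : Matrix m m R)
    (u : m → R) :
    star u ⬝ᵥ (Mᴴ⁻¹ * Y * M⁻¹) *ᵥ u = star (M⁻¹ *ᵥ u) ⬝ᵥ Y *ᵥ (M⁻¹ *ᵥ u) := by
  rw [← conjTranspose_nonsing_inv, star_dotProduct_conjTranspose_mul_mul_mulVec]

theorem reduced_transfer_eq_of_mulVec_eq [DecidableEq m] [DecidableEq n] (M Q : Matrix m m R)
    (hM : IsUnit M.det) (V W : Matrix m n R) (b : m → R) (hred : IsUnit (Wᴴ * M * V).det)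
    {c : n → R} (hc : V *ᵥ c = M⁻¹ *ᵥ b) :
    star (Wᴴ *ᵥ b) ⬝ᵥ ((Wᴴ * M * V)ᴴ⁻¹ * (Vᴴ * Q * V) * (Wᴴ * M * V)⁻¹) *ᵥ (Wᴴ *ᵥ b)
      = star b ⬝ᵥ (Mᴴ⁻¹ * Q * M⁻¹) *ᵥ b := by
  have hsolve : M *ᵥ V *ᵥ c = b := by
    rw [hc, mulVec_mulVec, mul_nonsing_inv _ hM, one_mulVec]
  rw [star_dotProduct_inv_conjTranspose_mul_mul_inv_mulVec,
    star_dotProduct_inv_conjTranspose_mul_mul_inv_mulVec,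
    inv_mul_mul_mulVec_of_mulVec_eq _ _ _ hred hsolve,
    star_dotProduct_conjTranspose_mul_mul_mulVec, hc]

theorem interpolation_independent_of_basis_general (n r k : ℕ)
    (E A Q : Matrix (Fin n) (Fin n) ℂ) (b : Fin n → ℂ)
    (z : Fin k → ℂ) (hpencil : ∀ i, IsUnit (z i • E - A).det)
    (V V' W : Matrix (Fin n) (Fin r) ℂ)
    (hrange : ∀ i, ∃ c : Fin r → ℂ, V.mulVec c = ((z i • E - A)⁻¹).mulVec b)
    (hspan : ∀ x : Fin n → ℂ,
      (∃ c : Fin r → ℂ, V.mulVec c = x) ↔ (∃ c : Fin r → ℂ, V'.mulVec c = x))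
    (hred : ∀ i, IsUnit (Wᴴ * (z i • E - A) * V).det)
    (hred' : ∀ i, IsUnit (Wᴴ * (z i • E - A) * V').det) :
    ∀ i : Fin k,
      (star (Wᴴ.mulVec b) ⬝ᵥ
          (((z i • (Wᴴ * E * V) - Wᴴ * A * V)ᴴ)⁻¹ * (Vᴴ * Q * V) *
            (z i • (Wᴴ * E * V) - Wᴴ * A * V)⁻¹).mulVec (Wᴴ.mulVec b)
        = star b ⬝ᵥ (((z i • E - A)ᴴ)⁻¹ * Q * (z i • E - A)⁻¹).mulVec b) ∧
      (star (Wᴴ.mulVec b) ⬝ᵥ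
          (((z i • (Wᴴ * E * V') - Wᴴ * A * V')ᴴ)⁻¹ * (V'ᴴ * Q * V') *
            (z i • (Wᴴ * E * V') - Wᴴ * A * V')⁻¹).mulVec (Wᴴ.mulVec b)
        = star b ⬝ᵥ (((z i • E - A)ᴴ)⁻¹ * Q * (z i • E - A)⁻¹).mulVec b) := by
  intro i
  have hreduced_pencil (U : Matrix (Fin n) (Fin r) ℂ) :
      z i • (Wᴴ * E * U) - Wᴴ * A * U = Wᴴ * (z i • E - A) * U := by
    rw [Matrix.mul_sub, Matrix.sub_mul, Matrix.mul_smul, Matrix.smul_mul]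
  obtain ⟨c, hc⟩ := hrange i
  obtain ⟨c', hc'⟩ := (hspan _).mp ⟨c, hc⟩
  rw [hreduced_pencil V, hreduced_pencil V']
  exact ⟨reduced_transfer_eq_of_mulVec_eq _ Q (hpencil i) V W b (hred i) hc,
    reduced_transfer_eq_of_mulVec_eq _ Q (hpencil i) V' W b (hred' i) hc'⟩

/-- Interpolation via projection depends only on the projection
subspace: two basis matrices `V`, `V'` with the same column span (both containing
all `(zᵢE−A)⁻¹b`) yield reduced transfer functions that both equal `H(zᵢ)`. -/
theorem interpolation_independent_of_basis (n r k : ℕ)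
    (E A Q : Matrix (Fin n) (Fin n) ℂ) (hQ : Qᴴ = Q) (b : Fin n → ℂ)
    (z : Fin k → ℂ) (hpencil : ∀ i, IsUnit (z i • E - A).det)
    (V V' W : Matrix (Fin n) (Fin r) ℂ)
    (hrange : ∀ i, ∃ c : Fin r → ℂ, V.mulVec c = ((z i • E - A)⁻¹).mulVec b)
    (hspan : ∀ x : Fin n → ℂ,
      (∃ c : Fin r → ℂ, V.mulVec c = x) ↔ (∃ c : Fin r → ℂ, V'.mulVec c = x))
    (hred : ∀ i, IsUnit (Wᴴ * (z i • E - A) * V).det)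
    (hred' : ∀ i, IsUnit (Wᴴ * (z i • E - A) * V').det) :
    ∀ i : Fin k,
      (star (Wᴴ.mulVec b) ⬝ᵥ
          (((z i • (Wᴴ * E * V) - Wᴴ * A * V)ᴴ)⁻¹ * (Vᴴ * Q * V) *
            (z i • (Wᴴ * E * V) - Wᴴ * A * V)⁻¹).mulVec (Wᴴ.mulVec b)
        = star b ⬝ᵥ (((z i • E - A)ᴴ)⁻¹ * Q * (z i • E - A)⁻¹).mulVec b) ∧
      (star (Wᴴ.mulVec b) ⬝ᵥ
          (((z i • (Wᴴ * E * V') - Wᴴ * A * V')ᴴ)⁻¹ * (V'ᴴ * Q * V') *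
            (z i • (Wᴴ * E * V') - Wᴴ * A * V')⁻¹).mulVec (Wᴴ.mulVec b)
        = star b ⬝ᵥ (((z i • E - A)ᴴ)⁻¹ * Q * (z i • E - A)⁻¹).mulVec b) :=
  interpolation_independent_of_basis_general n r k E A Q b z hpencil V V' W hrange hspan hred hred'
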